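/- arXiv:2408.16593 — 2 statements merged into one kernel-verified Lean document; each statement's English description precedes it below -/
import Mathlib

section
/- Let X be a Banach space and (x_n)_{n∈ℕ} ⊆ X, (x_n^*)_{n∈ℕ} ⊆ X^* be a Schauder frame of X, i.e., x = ∑_{n=1}^∞ ⟨x, x_n^*⟩ x_n (convergence in norm) for all x ∈ X. Suppose there is a sequence of scalars (c_n) such that ∑_{n=1}^∞ c_n x_n converges to some nonzero x_0 ∈ X. Then there exists a sequence (y_n^*) ⊆ X^* such that (1) x = ∑_{n=1}^∞ ⟨x, y_n^*⟩ x_n for all x ∈ X (i.e., (y_n^*) is an alternative dual of (x_n)), and (2) ⟨x_0, y_n^*⟩ = c_n for all n. -/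
/-!
Choose `f ∈ X^*` with `f x₀ = 1` (Hahn–Banach) and put `y n = xs n + (c n - xs n x₀) • f`.
Then `y n x₀ = c n`, and the expansion of `x` with respect to `y` differs from the one with
respect to `xs` by `f x • ∑ (c n - xs n x₀) • xv n`, whose partial sums tend to
`f x • (x₀ - x₀) = 0`.
-/

open Filter Topology Finset

section AlternativeDual

variable {𝕜 X : Type*} [Field 𝕜] [TopologicalSpace 𝕜] [IsTopologicalRing 𝕜]
  [AddCommGroup X] [TopologicalSpace X] [Module 𝕜 X] [IsTopologicalAddGroup X]
  [ContinuousConstSMul 𝕜 X]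

def IsAlternativeDual (xv : ℕ → X) (y : ℕ → X →L[𝕜] 𝕜) : Prop :=
  ∀ x : X, Tendsto (fun N => ∑ n ∈ range N, y n x • xv n) atTop (𝓝 x)

theorem IsAlternativeDual.add_smul_of_tendsto_zero {xv : ℕ → X} {y : ℕ → X →L[𝕜] 𝕜}
    (hy : IsAlternativeDual xv y) {a : ℕ → 𝕜}
    (ha : Tendsto (fun N => ∑ n ∈ range N, a n • xv n) atTop (𝓝 0))
    (f : X →L[𝕜] 𝕜) : IsAlternativeDual xv (fun n => y n + a n • f) := by
  intro x
  have hsum : ∀ N, ∑ n ∈ range N, (y n + a n • f) x • xv n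
      = ∑ n ∈ range N, y n x • xv n + f x • ∑ n ∈ range N, a n • xv n := by
    intro N
    rw [smul_sum, ← sum_add_distrib]
    refine sum_congr rfl fun n _ => ?_
    rw [add_apply, smul_apply, smul_eq_mul, add_smul, smul_smul, mul_comm (f x)]
  simp only [hsum]
  simpa using (hy x).add (ha.const_smul (f x))

theorem IsAlternativeDual.exists_apply_eq [SeparatingDual 𝕜 X] {xv : ℕ → X}
    {xs : ℕ → X →L[𝕜] 𝕜} (hxs : IsAlternativeDual xv xs) {c : ℕ → 𝕜} {x₀ : X}
    (hx₀ : x₀ ≠ 0)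
    (hc : Tendsto (fun N => ∑ n ∈ range N, c n • xv n) atTop (𝓝 x₀)) :
    ∃ y : ℕ → X →L[𝕜] 𝕜, IsAlternativeDual xv y ∧ ∀ n, y n x₀ = c n := by
  obtain ⟨f, hf⟩ := SeparatingDual.exists_eq_one (R := 𝕜) hx₀
  have hdiff : Tendsto (fun N => ∑ n ∈ range N, (c n - xs n x₀) • xv n) atTop (𝓝 0) := by
    simpa only [sub_smul, sum_sub_distrib, sub_self] using hc.sub (hxs x₀)
  refine ⟨fun n => xs n + (c n - xs n x₀) • f, hxs.add_smul_of_tendsto_zero hdiff f,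
    fun n => ?_⟩
  simp [hf]

end AlternativeDual

theorem schauder_frame_alternative_dual_with_prescribed_coeffs_general
    {X : Type*} [NormedAddCommGroup X] [NormedSpace ℂ X]
    (xv : ℕ → X) (xs : ℕ → X →L[ℂ] ℂ)
    (hframe : ∀ x : X,
      Tendsto (fun N => ∑ n ∈ Finset.range N, (xs n x) • xv n) atTop (nhds x))
    (c : ℕ → ℂ) (x₀ : X) (hx₀ : x₀ ≠ 0)
    (hconv : Tendsto (fun N => ∑ n ∈ Finset.range N, c n • xv n) atTop (nhds x₀)) :
    ∃ y : ℕ → X →L[ℂ] ℂ,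
      (∀ x : X, Tendsto (fun N => ∑ n ∈ Finset.range N, (y n x) • xv n) atTop (nhds x)) ∧
      (∀ n : ℕ, y n x₀ = c n) :=
  IsAlternativeDual.exists_apply_eq hframe hx₀ hconv

/-- Construction of alternative duals: if `((xv n), (xs n))` is a Schauder frame of a Banach
space `X` and `∑ c n • xv n` converges to some nonzero `x₀`, then there is an alternative dual
`(y n)` of `(xv n)` with `y n x₀ = c n` for all `n`. -/
theorem schauder_frame_alternative_dual_with_prescribed_coeffs
    {X : Type*} [NormedAddCommGroup X] [NormedSpace ℂ X] [CompleteSpace X]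
    (xv : ℕ → X) (xs : ℕ → X →L[ℂ] ℂ)
    (hframe : ∀ x : X,
      Tendsto (fun N => ∑ n ∈ Finset.range N, (xs n x) • xv n) atTop (nhds x))
    (c : ℕ → ℂ) (x₀ : X) (hx₀ : x₀ ≠ 0)
    (hconv : Tendsto (fun N => ∑ n ∈ Finset.range N, c n • xv n) atTop (nhds x₀)) :
    ∃ y : ℕ → X →L[ℂ] ℂ,
      (∀ x : X, Tendsto (fun N => ∑ n ∈ Finset.range N, (y n x) • xv n) atTop (nhds x)) ∧
      (∀ n : ℕ, y n x₀ = c n) :=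
  schauder_frame_alternative_dual_with_prescribed_coeffs_general xv xs hframe c x₀ hx₀ hconv
end

section
/- Fix 1 < p < q ≤ 2 and let g_p(x) = ∑_{n=1}^∞ 2^{−n/p} f_n(x), where f_n = ∑_{m=2^{n−1}}^{2^n−1} ε_m e^{2πimx} with ε_m ∈ {±1} and ‖f_n‖_{L^∞([0,1])} ≤ 2^{(n+1)/2}. Then (a) the series defining g_p converges uniformly on [0,1] (so g_p is bounded), (b) ∑_{k∈ℤ} |ĝ_p(k)|^q < ∞, and (c) ∑_{k∈ℤ} |ĝ_p(k)|^p = ∞, where ĝ_p(k) = ∫_0^1 g_p(x) e^{−2πikx} dx. -/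
/-!
The blocks `f_n` have disjoint dyadic frequency ranges `[2^(n-1), 2^n)`, so the Fourier coefficient
of `g_p` at `k ≥ 1` is `±2^(-n/p)` with `n = log₂ k + 1`, and all other coefficients vanish. Since
`2^n` lies in `(k, 2k]`, `|ĝ_p(k)|^r` is comparable to `k^(-r/p)`, which is summable exactly when
`r > p`. The series converges uniformly because its terms are bounded by `2^(1/2 + n(1/2 - 1/p))`,
a geometric sequence as `p < 2`; uniform domination also lets the integrals defining the
coefficients pass through the sum.
-/

open MeasureTheory intervalIntegral Filter
open Complex (exp I)
open scoped Real

noncomputable def unitFourierCoeff (g : ℝ → ℂ) (k : ℤ) : ℂ :=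
  ∫ x in (0 : ℝ)..1, g x * exp (-2 * π * I * (k : ℂ) * (x : ℂ))

lemma integral_exp_two_pi_I_int_mul (d : ℤ) :
    ∫ x in (0 : ℝ)..1, exp (2 * π * I * (d : ℂ) * (x : ℂ)) =
      if d = 0 then 1 else 0 := by
  split_ifs with hd
  · simp [hd]
  have hc : 2 * π * I * (d : ℂ) ≠ 0 := by
    simp [Real.pi_ne_zero, hd]
  rw [integral_exp_mul_complex hc, Complex.ofReal_one, mul_one, Complex.ofReal_zero, mul_zero,
    Complex.exp_zero, show 2 * π * I * d = d * (2 * π * I) by ring,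
    Complex.exp_int_mul_two_pi_mul_I, sub_self, zero_div]

lemma unitFourierCoeff_const_mul (c : ℂ) (g : ℝ → ℂ) (k : ℤ) :
    unitFourierCoeff (fun x => c * g x) k = c * unitFourierCoeff g k := by
  rw [unitFourierCoeff, unitFourierCoeff, ← intervalIntegral.integral_const_mul]
  simp_rw [mul_assoc]

lemma unitFourierCoeff_exp (m k : ℤ) :
    unitFourierCoeff (fun x => exp (2 * π * I * (m : ℂ) * (x : ℂ))) k =
      if m = k then 1 else 0 := by
  have hexp : ∀ x : ℝ, exp (2 * π * I * m * x) *
      exp (-2 * π * I * k * x) =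
        exp (2 * π * I * ((m - k : ℤ) : ℂ) * x) := fun x => by
    rw [← Complex.exp_add]; push_cast; ring_nf
  simp only [unitFourierCoeff, hexp, integral_exp_two_pi_I_int_mul, sub_eq_zero]

lemma unitFourierCoeff_finsetSum {ι : Type*} (s : Finset ι) {F : ι → ℝ → ℂ}
    (hF : ∀ i ∈ s, Continuous (F i)) (k : ℤ) :
    unitFourierCoeff (fun x => ∑ i ∈ s, F i x) k = ∑ i ∈ s, unitFourierCoeff (F i) k := by
  simp only [unitFourierCoeff, Finset.sum_mul]
  exact intervalIntegral.integral_finsetSum fun i hi =>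
    ((hF i hi).mul (by fun_prop)).intervalIntegrable _ _

lemma unitFourierCoeff_trigPoly (s : Finset ℕ) (c : ℕ → ℂ) (k : ℤ) :
    unitFourierCoeff
        (fun x => ∑ m ∈ s, c m * exp (2 * π * I * (m : ℂ) * (x : ℂ))) k =
      ∑ m ∈ s, if (m : ℤ) = k then c m else 0 := by
  rw [unitFourierCoeff_finsetSum s fun m _ => by fun_prop]
  refine Finset.sum_congr rfl fun m _ => ?_
  rw [unitFourierCoeff_const_mul, ← Int.cast_natCast, unitFourierCoeff_exp, mul_ite, mul_one,
    mul_zero]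

lemma mem_Ico_two_pow_iff {n K : ℕ} (hn : 1 ≤ n) (hK : 1 ≤ K) :
    K ∈ Finset.Ico (2 ^ (n - 1)) (2 ^ n) ↔ n = Nat.log 2 K + 1 := by
  obtain ⟨n, rfl⟩ := Nat.exists_eq_add_of_le' hn
  rw [Finset.mem_Ico, Nat.add_sub_cancel, add_left_inj, eq_comm,
    Nat.log_eq_iff (Or.inr ⟨one_lt_two, by omega⟩)]

lemma unitFourierCoeff_block {n : ℕ} (hn : 1 ≤ n) (c : ℕ → ℂ) (k : ℤ) :
    unitFourierCoeff (fun x => ∑ m ∈ Finset.Ico (2 ^ (n - 1)) (2 ^ n),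
        c m * exp (2 * π * I * (m : ℂ) * (x : ℂ))) k =
      if 1 ≤ k ∧ n = Nat.log 2 k.toNat + 1 then c k.toNat else 0 := by
  rw [unitFourierCoeff_trigPoly]
  by_cases hk : 1 ≤ k
  · lift k to ℕ using by omega
    simp only [Nat.cast_inj, Finset.sum_ite_eq', Int.toNat_natCast,
      mem_Ico_two_pow_iff hn (by omega : 1 ≤ k), hk, true_and]
  · rw [if_neg fun h => hk h.1]
    refine Finset.sum_eq_zero fun m hm => if_neg ?_
    have := (Finset.mem_Ico.mp hm).1
    have := Nat.one_le_two_pow (n := n - 1)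
    omega

lemma hasSum_unitFourierCoeff_tsum {F : ℕ → ℝ → ℂ} {u : ℕ → ℝ} (hF : ∀ n, Continuous (F n))
    (hu : Summable u) (hFu : ∀ n, ∀ x ∈ Set.Icc (0 : ℝ) 1, ‖F n x‖ ≤ u n) (k : ℤ) :
    HasSum (fun n => unitFourierCoeff (F n) k) (unitFourierCoeff (fun x => ∑' n, F n x) k) := by
  have hIoc : Set.uIoc (0 : ℝ) 1 ⊆ Set.Icc 0 1 := by
    rw [Set.uIoc_of_le zero_le_one]; exact Set.Ioc_subset_Icc_self
  have hexp : ∀ x : ℝ, ‖exp (-2 * π * I * (k : ℂ) * (x : ℂ))‖ = 1 :=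
    fun x => by
      rw [show -2 * π * I * k * x = ((-2 * π * k * x : ℝ) : ℂ) * I
        by push_cast; ring, Complex.norm_exp_ofReal_mul_I]
  refine intervalIntegral.hasSum_integral_of_dominated_convergence (fun n _ => u n)
    (fun n => ((hF n).mul (by fun_prop)).aestronglyMeasurable) (fun n => ae_of_all _ fun x hx => ?_)
    (ae_of_all _ fun _ _ => hu) intervalIntegrable_const (ae_of_all _ fun x hx => ?_)
  · rw [norm_mul, hexp, mul_one]
    exact hFu n x (hIoc hx)
  · exact ((hu.of_norm_bounded fun n => hFu n x (hIoc hx)).hasSum).mul_right _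

lemma unitFourierCoeff_tsum_blocks {w : ℕ → ℂ} {ε : ℕ → ℕ → ℂ} {f : ℕ → ℝ → ℂ} {u : ℕ → ℝ}
    (hf : ∀ n : ℕ, 1 ≤ n → ∀ x : ℝ,
      f n x = ∑ m ∈ Finset.Ico (2 ^ (n - 1)) (2 ^ n),
        ε n m * exp (2 * π * I * (m : ℂ) * (x : ℂ)))
    (hu : Summable u) (hfu : ∀ n, ∀ x ∈ Set.Icc (0 : ℝ) 1, ‖w (n + 1) * f (n + 1) x‖ ≤ u n)
    (k : ℤ) :
    unitFourierCoeff (fun x => ∑' n, w (n + 1) * f (n + 1) x) k =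
      if 1 ≤ k then w (Nat.log 2 k.toNat + 1) * ε (Nat.log 2 k.toNat + 1) k.toNat else 0 := by
  have hblock : ∀ n, unitFourierCoeff (fun x => w (n + 1) * f (n + 1) x) k =
      if 1 ≤ k ∧ n = Nat.log 2 k.toNat then w (n + 1) * ε (n + 1) k.toNat else 0 := fun n => by
    rw [unitFourierCoeff_const_mul, funext (hf (n + 1) (Nat.le_add_left 1 n)),
      unitFourierCoeff_block (Nat.le_add_left 1 n)]
    simp only [add_left_inj, mul_ite, mul_zero]
  have hcont : ∀ n, Continuous fun x => w (n + 1) * f (n + 1) x := fun n => by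
    rw [funext (hf (n + 1) (Nat.le_add_left 1 n))]; fun_prop
  refine (hasSum_unitFourierCoeff_tsum hcont hu hfu k).unique ?_
  simp only [hblock]
  by_cases hk : 1 ≤ k
  · rw [if_pos hk]
    convert hasSum_single (Nat.log 2 k.toNat) fun n hn => if_neg fun h : 1 ≤ k ∧ _ => hn h.2
    simp [hk]
  · simp only [hk, false_and, if_false]
    exact hasSum_zero

lemma tendstoUniformlyOn_sum_Icc_one {β E : Type*} [NormedAddCommGroup E] [CompleteSpace E]
    {F : ℕ → β → E} {u : ℕ → ℝ} {s : Set β} (hu : Summable u)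
    (hFu : ∀ n, ∀ x ∈ s, ‖F (n + 1) x‖ ≤ u n) :
    TendstoUniformlyOn (fun N x => ∑ n ∈ Finset.Icc 1 N, F n x) (fun x => ∑' n, F (n + 1) x)
      atTop s := by
  have hshift : ∀ N x, ∑ n ∈ Finset.Icc 1 N, F n x = ∑ n ∈ Finset.range N, F (n + 1) x := by
    intro N x
    rw [← Finset.Ico_add_one_right_eq_Icc, Finset.sum_Ico_eq_sum_range, Nat.add_sub_cancel]
    simp only [add_comm]
  simpa only [hshift] using tendstoUniformlyOn_tsum_nat hu hFu

lemma summable_two_rpow_neg_div_mul_two_rpow {p : ℝ} (hp : 0 < p) (hp2 : p < 2) :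
    Summable fun n : ℕ => (2 : ℝ) ^ (-(n : ℝ) / p) * (2 : ℝ) ^ (((n : ℝ) + 1) / 2) := by
  have hratio : (2 : ℝ) ^ (1 / 2 - 1 / p) < 1 :=
    Real.rpow_lt_one_of_one_lt_of_neg one_lt_two (by linarith [one_div_lt_one_div_of_lt hp hp2])
  refine ((summable_geometric_of_lt_one (by positivity) hratio).mul_left
    ((2 : ℝ) ^ (1 / 2 : ℝ))).congr fun n => ?_
  rw [← Real.rpow_natCast, ← Real.rpow_mul zero_le_two, ← Real.rpow_add two_pos,
    ← Real.rpow_add two_pos]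
  ring_nf

-- `2 ^ (log₂ (k + 1) + 1)` lies in `(k + 1, 2 (k + 1)]`.
lemma summable_two_pow_succ_log_rpow_neg_iff {s : ℝ} (hs : 0 < s) :
    Summable (fun k : ℕ => ((2 : ℝ) ^ (Nat.log 2 (k + 1) + 1)) ^ (-s)) ↔ 1 < s := by
  have hzeta : Summable (fun k : ℕ => ((k + 1 : ℕ) : ℝ) ^ (-s)) ↔ 1 < s := by
    rw [summable_nat_add_iff 1 (f := fun k : ℕ => (k : ℝ) ^ (-s)), Real.summable_nat_rpow,
      neg_lt_neg_iff]
  have hlt : ∀ k : ℕ, ((k + 1 : ℕ) : ℝ) ≤ 2 ^ (Nat.log 2 (k + 1) + 1) := fun k => by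
    exact_mod_cast (Nat.lt_pow_succ_log_self one_lt_two (k + 1)).le
  have hle : ∀ k : ℕ, (2 : ℝ) ^ (Nat.log 2 (k + 1) + 1) ≤ 2 * ((k + 1 : ℕ) : ℝ) := fun k => by
    rw [pow_succ, mul_comm]
    gcongr
    exact_mod_cast Nat.pow_log_le_self 2 k.succ_ne_zero
  have hupper : ∀ k : ℕ, ((2 : ℝ) ^ (Nat.log 2 (k + 1) + 1)) ^ (-s) ≤ ((k + 1 : ℕ) : ℝ) ^ (-s) :=
    fun k => Real.rpow_le_rpow_of_nonpos (by positivity) (hlt k) (by linarith)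
  have hlower : ∀ k : ℕ, (2 : ℝ) ^ (-s) * ((k + 1 : ℕ) : ℝ) ^ (-s) ≤
      ((2 : ℝ) ^ (Nat.log 2 (k + 1) + 1)) ^ (-s) := fun k => by
    rw [← Real.mul_rpow zero_le_two (by positivity)]
    exact Real.rpow_le_rpow_of_nonpos (by positivity) (hle k) (by linarith)
  rw [← hzeta]
  constructor
  · intro h
    refine (h.of_nonneg_of_le (fun k => by positivity) hlower).mul_left (2 ^ s) |>.congr fun k => ?_
    rw [← mul_assoc, ← Real.rpow_add two_pos, add_neg_cancel, Real.rpow_zero, one_mul]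
  · exact fun h => h.of_nonneg_of_le (fun k => by positivity) hupper

lemma summable_int_iff_summable_nat_succ {G : Type*} [AddCommGroup G] [UniformSpace G]
    [IsUniformAddGroup G] [CompleteSpace G] {f : ℤ → G} (hf : ∀ k ≤ 0, f k = 0) :
    Summable f ↔ Summable fun n : ℕ => f (n + 1) := by
  have hneg : (fun n : ℕ => f (-n)) = fun _ => 0 := funext fun n => hf _ (by omega)
  rw [summable_int_iff_summable_nat_and_neg, hneg, and_iff_left summable_zero,
    ← summable_nat_add_iff 1]
  simp only [Nat.cast_add, Nat.cast_one]

lemma summable_two_rpow_neg_succ_log_div_rpow_iff {p r : ℝ} (hp : 0 < p) (hr : 0 < r) :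
    Summable (fun k : ℤ =>
      (if 1 ≤ k then (2 : ℝ) ^ (-((Nat.log 2 k.toNat + 1 : ℕ) : ℝ) / p) else 0) ^ r) ↔ p < r := by
  rw [summable_int_iff_summable_nat_succ fun k hk => by
    rw [if_neg (by omega), Real.zero_rpow hr.ne']]
  have hterm : ∀ n : ℕ,
      (if 1 ≤ (n : ℤ) + 1 then
        (2 : ℝ) ^ (-((Nat.log 2 ((n : ℤ) + 1).toNat + 1 : ℕ) : ℝ) / p) else 0) ^ r =
      ((2 : ℝ) ^ (Nat.log 2 (n + 1) + 1)) ^ (-(r / p)) := fun n => by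
    rw [if_pos (by omega), show ((n : ℤ) + 1).toNat = n + 1 by omega, ← Real.rpow_natCast,
      ← Real.rpow_mul zero_le_two, ← Real.rpow_mul zero_le_two]
    ring_nf
  simp only [hterm]
  rw [summable_two_pow_succ_log_rpow_neg_iff (div_pos hr hp), one_lt_div hp]

/-- For `1 < p < q ≤ 2`, the function `g_p = ∑_{n≥1} 2^{−n/p} f_n` built from the
Rudin–Shapiro blocks `f_n` (±1 coefficients on `[2^{n−1}, 2^n−1]`, sup-norm `≤ 2^{(n+1)/2}`)
exists as a uniform limit on `[0,1]`, its Fourier coefficients are `q`-summable, but they are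
not `p`-summable. -/
theorem gp_in_Mq_not_in_Mp (p q : ℝ) (hp : 1 < p) (hpq : p < q) (hq : q ≤ 2)
    (ε : ℕ → ℕ → ℂ) (f : ℕ → ℝ → ℂ)
    (hε : ∀ n : ℕ, 1 ≤ n → ∀ m : ℕ, ε n m = 1 ∨ ε n m = -1)
    (hf : ∀ n : ℕ, 1 ≤ n → ∀ x : ℝ,
      f n x = ∑ m ∈ Finset.Ico (2 ^ (n - 1)) (2 ^ n),
        ε n m * Complex.exp (2 * (Real.pi : ℂ) * Complex.I * (m : ℂ) * (x : ℂ)))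
    (hbd : ∀ n : ℕ, 1 ≤ n → ∀ x ∈ Set.Icc (0 : ℝ) 1,
      ‖f n x‖ ≤ (2 : ℝ) ^ (((n : ℝ) + 1) / 2)) :
    ∃ g : ℝ → ℂ,
      TendstoUniformlyOn
        (fun N : ℕ => fun x : ℝ =>
          ∑ n ∈ Finset.Icc 1 N, (((2 : ℝ) ^ (-(n : ℝ) / p) : ℝ) : ℂ) * f n x)
        g atTop (Set.Icc (0 : ℝ) 1) ∧
      Summable (fun k : ℤ =>
        ‖∫ x in (0 : ℝ)..1,
            g x * Complex.exp (-2 * (Real.pi : ℂ) * Complex.I * (k : ℂ) * (x : ℂ))‖ ^ q) ∧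
      ¬ Summable (fun k : ℤ =>
        ‖∫ x in (0 : ℝ)..1,
            g x * Complex.exp (-2 * (Real.pi : ℂ) * Complex.I * (k : ℂ) * (x : ℂ))‖ ^ p) := by
  have hp0 : 0 < p := by linarith
  set w : ℕ → ℂ := fun n => (((2 : ℝ) ^ (-(n : ℝ) / p) : ℝ) : ℂ)
  have hwf : ∀ n, ∀ x ∈ Set.Icc (0 : ℝ) 1, ‖w (n + 1) * f (n + 1) x‖ ≤
      (2 : ℝ) ^ (-((n + 1 : ℕ) : ℝ) / p) * (2 : ℝ) ^ ((((n + 1 : ℕ) : ℝ) + 1) / 2) :=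
    fun n x hx => by
      rw [norm_mul, Complex.norm_real, Real.norm_of_nonneg (by positivity)]
      exact mul_le_mul_of_nonneg_left (hbd _ (Nat.le_add_left 1 n) x hx) (by positivity)
  have hu := (summable_nat_add_iff 1).mpr
    (summable_two_rpow_neg_div_mul_two_rpow hp0 (hpq.trans_le hq))
  set g : ℝ → ℂ := fun x => ∑' n, w (n + 1) * f (n + 1) x
  have hcoeff : ∀ k, ‖unitFourierCoeff g k‖ =
      if 1 ≤ k then (2 : ℝ) ^ (-((Nat.log 2 k.toNat + 1 : ℕ) : ℝ) / p) else 0 := fun k => by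
    rw [unitFourierCoeff_tsum_blocks hf hu hwf]
    split_ifs
    · have hεn : ‖ε (Nat.log 2 k.toNat + 1) k.toNat‖ = 1 := by
        rcases hε (Nat.log 2 k.toNat + 1) (Nat.le_add_left 1 _) k.toNat with h | h <;> simp [h]
      rw [norm_mul, hεn, mul_one, Complex.norm_real, Real.norm_of_nonneg (by positivity)]
    · exact norm_zero
  have hsummable_iff : ∀ r, 0 < r → (Summable (fun k => ‖unitFourierCoeff g k‖ ^ r) ↔ p < r) :=
    fun r hr => by simpa only [hcoeff] using summable_two_rpow_neg_succ_log_div_rpow_iff hp0 hr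
  exact ⟨g, tendstoUniformlyOn_sum_Icc_one hu hwf, (hsummable_iff q (by linarith)).mpr hpq,
    fun h => lt_irrefl p ((hsummable_iff p hp0).mp h)⟩
end
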